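/- For nonnegative integers L and M, the alternating sum over all integers j of (-1)^j q^{j^2} B(L,M,j,j) equals the q^2-binomial coefficient [L+M choose M]_{q^2}. -/
import Mathlib

open Polynomial

noncomputable def qb : ℕ → ℕ → Polynomial ℤ
  | _, 0 => 1
  | 0, _ + 1 => 0
  | n + 1, m + 1 => qb n m + X ^ (m + 1) * qb n (m + 1)

lemma qb_zero_right (n : ℕ) : qb n 0 = 1 := by cases n <;> rfl

lemma qb_succ_succ (n m : ℕ) : qb (n+1) (m+1) = qb n m + X ^ (m+1) * qb n (m+1) := rfl

lemma qb_eq_zero : ∀ {n m : ℕ}, n < m → qb n m = 0 := by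
  intro n
  induction n with
  | zero => intro m h; obtain ⟨k, rfl⟩ : ∃ k, m = k + 1 := ⟨m - 1, by omega⟩; rfl
  | succ n ih =>
    intro m h
    obtain ⟨k, rfl⟩ : ∃ k, m = k + 1 := ⟨m - 1, by omega⟩
    rw [qb_succ_succ, ih (by omega), ih (by omega)]
    ring

lemma qb_self (n : ℕ) : qb n n = 1 := by
  induction n with
  | zero => rfl
  | succ n ih => rw [qb_succ_succ, ih, qb_eq_zero (by omega)]; ring

lemma qb_pascal2 : ∀ (n m : ℕ), qb (n+1) (m+1) = qb n (m+1) + X ^ (n - m) * qb n m := by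
  intro n
  induction n with
  | zero =>
    intro m
    cases m with
    | zero => simp [qb_succ_succ, qb]
    | succ k => simp [qb_succ_succ, qb, qb_eq_zero (show 0 < k+1 by omega)]
  | succ n ih =>
    intro m
    cases m with
    | zero =>
      have h1 := ih 0
      have h2 := qb_succ_succ n 0
      rw [qb_succ_succ (n+1) 0, ih 0]
      simp only [Nat.sub_zero, qb_zero_right] at h1 h2 ⊢
      linear_combination h1 - h2
    | succ k =>
      rcases lt_or_ge n (k+1) with h | h
      · rcases eq_or_lt_of_le (show n ≤ k by omega) with rfl | h2
        · rw [show n+1-(n+1) = 0 from by omega, qb_self, qb_self,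
            qb_eq_zero (show n+1 < n+1+1 by omega)]
          ring
        · rw [qb_eq_zero (show n+1+1 < k+1+1 by omega), qb_eq_zero (show n+1 < k+1+1 by omega),
            qb_eq_zero (show n+1 < k+1 by omega)]
          ring
      · obtain ⟨d, rfl⟩ : ∃ d, n = k+1+d := ⟨n-(k+1), by omega⟩
        have P0 := qb_succ_succ (k+1+d+1) (k+1)
        have hA1 := ih k
        have hA2 := qb_succ_succ (k+1+d) k
        have hB1 := ih (k+1)
        have hB2 := qb_succ_succ (k+1+d) (k+1)
        rw [show k+1+d-k = d+1 from by omega] at hA1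
        rw [show k+1+d-(k+1) = d from by omega] at hB1
        rw [show k+1+d+1-(k+1) = d+1 from by omega]
        linear_combination P0 + hA1 + X^(k+2)*hB1 - hB2 - X^(d+1)*hA2

/-- The Gaussian binomial coefficient with integer arguments, zero unless `0 ≤ m ≤ n`. -/
noncomputable def qbz (n m : ℤ) : Polynomial ℤ :=
  if 0 ≤ m ∧ m ≤ n then qb n.toNat m.toNat else 0

/-- `B(L,M,a,b) = [L+M+a-b; L+a]_q [L+M-a+b; L-a]_q`. -/
noncomputable def Bp (L M a b : ℤ) : Polynomial ℤ :=
  qbz (L + M + a - b) (L + a) * qbz (L + M - a + b) (L - a)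

lemma qbz_of_neg {n m : ℤ} (h : m < 0) : qbz n m = 0 := if_neg (by omega)

lemma qbz_of_gt {n m : ℤ} (h : n < m) : qbz n m = 0 := if_neg (by omega)

lemma qbz_coe (a b : ℕ) : qbz (a:ℤ) (b:ℤ) = qb a b := by
  unfold qbz
  rcases le_or_gt b a with h | h
  · rw [if_pos ⟨Int.natCast_nonneg b, by exact_mod_cast h⟩]
    simp
  · rw [if_neg (by push_cast; omega), qb_eq_zero h]

lemma qbz_pascal (n k : ℤ) (hn : 1 ≤ n) :
    qbz n k = qbz (n-1) (k-1) + X ^ k.toNat * qbz (n-1) k := by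
  rcases lt_trichotomy k 0 with hk | rfl | hk
  · rw [qbz_of_neg hk, qbz_of_neg (by omega), qbz_of_neg hk]; ring
  · obtain ⟨a, rfl⟩ : ∃ a:ℕ, n = (a:ℤ)+1 := ⟨(n-1).toNat, by omega⟩
    rw [qbz_of_neg (by omega : (0:ℤ)-1 < 0)]
    rw [show ((a:ℤ)+1) = ((a+1:ℕ):ℤ) from by push_cast; ring,
      show ((a+1:ℕ):ℤ)-1 = ((a:ℕ):ℤ) from by push_cast; ring,
      show (0:ℤ) = ((0:ℕ):ℤ) from rfl]
    rw [qbz_coe, qbz_coe, qb_zero_right, qb_zero_right]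
    simp
  · obtain ⟨a, rfl⟩ : ∃ a:ℕ, n = (a:ℤ)+1 := ⟨(n-1).toNat, by omega⟩
    obtain ⟨b, rfl⟩ : ∃ b:ℕ, k = (b:ℤ)+1 := ⟨(k-1).toNat, by omega⟩
    rw [show ((a:ℤ)+1) = ((a+1:ℕ):ℤ) from by push_cast; ring,
      show ((b:ℤ)+1) = ((b+1:ℕ):ℤ) from by push_cast; ring,
      show ((a+1:ℕ):ℤ)-1 = ((a:ℕ):ℤ) from by push_cast; ring,
      show ((b+1:ℕ):ℤ)-1 = ((b:ℕ):ℤ) from by push_cast; ring]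
    rw [qbz_coe, qbz_coe, qbz_coe, Int.toNat_natCast]
    exact qb_succ_succ a b

lemma Bp_diag (L M j : ℤ) : Bp L M j j = qbz (L+M) (L+j) * qbz (L+M) (L-j) := by
  unfold Bp
  rw [show L+M+j-j = L+M from by ring, show L+M-j+j = L+M from by ring]

noncomputable def cf (j : ℤ) : Polynomial ℤ := (-1)^j.natAbs * X^(j^2).toNat

lemma cf_succ (j : ℤ) : cf (j+1) = -((-1:Polynomial ℤ)^j.natAbs * X^((j+1)^2).toNat) := by
  unfold cf
  rcases Int.even_or_odd j with h | h
  · rw [(Int.natAbs_odd.mpr h.add_one).neg_one_pow, (Int.natAbs_even.mpr h).neg_one_pow]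
    ring
  · rw [(Int.natAbs_even.mpr h.add_one).neg_one_pow, (Int.natAbs_odd.mpr h).neg_one_pow]
    ring

noncomputable def Sp (L M : ℕ) : Polynomial ℤ :=
  ∑ j ∈ Finset.Icc (-(L:ℤ)) (L:ℤ),
    (-1:Polynomial ℤ)^j.natAbs * X^(j^2).toNat * Bp L M j j

lemma qbz_coe_zero (m : ℕ) : qbz (m:ℤ) 0 = 1 := by
  rw [show (0:ℤ) = ((0:ℕ):ℤ) from rfl, qbz_coe, qb_zero_right]

lemma qbz_coe_self (m : ℕ) : qbz (m:ℤ) (m:ℤ) = 1 := by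
  rw [qbz_coe, qb_self]

lemma Sp_left_zero (M : ℕ) : Sp 0 M = 1 := by
  unfold Sp
  rw [show -((0:ℕ):ℤ) = ((0:ℕ):ℤ) from by simp, Finset.Icc_self, Finset.sum_singleton]
  rw [Bp_diag]
  norm_num [qbz_coe_zero]

lemma Sp_right_zero (L : ℕ) : Sp L 0 = 1 := by
  unfold Sp
  rw [Finset.sum_eq_single_of_mem 0 (by simp) ?h]
  · rw [Bp_diag, show (L:ℤ)+(0:ℕ) = (L:ℤ) from by simp,
      show (L:ℤ)+(0:ℤ) = (L:ℤ) from by simp, show (L:ℤ)-(0:ℤ) = (L:ℤ) from by simp,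
      qbz_coe_self]
    simp
  case h =>
    intro j hj hne
    rw [Bp_diag, show (L:ℤ)+(0:ℕ) = (L:ℤ) from by simp]
    rcases lt_or_ge 0 j with h | h
    · rw [qbz_of_gt (show (L:ℤ) < L + j from by omega)]
      ring
    · rw [qbz_of_gt (show (L:ℤ) < L - j from by omega)]
      ring

noncomputable def tA (L M : ℕ) (j : ℤ) : Polynomial ℤ :=
  cf j * (qbz ((L:ℤ)+M+1) (L+j) * qbz ((L:ℤ)+M+1) ((L:ℤ)-j))

noncomputable def tB (L M : ℕ) (j : ℤ) : Polynomial ℤ :=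
  cf j * X^(((L:ℤ)+1-j).toNat) * (qbz ((L:ℤ)+M+1) (L+j) * qbz ((L:ℤ)+M+1) ((L:ℤ)+1-j))

noncomputable def tC (L M : ℕ) (j : ℤ) : Polynomial ℤ :=
  cf j * X^(((L:ℤ)+1+j).toNat) * (qbz ((L:ℤ)+M+1) ((L:ℤ)+1+j) * qbz ((L:ℤ)+M+1) ((L:ℤ)-j))

noncomputable def tD (L M : ℕ) (j : ℤ) : Polynomial ℤ :=
  cf j * (X^(((L:ℤ)+1+j).toNat) * X^(((L:ℤ)+1-j).toNat)) *
    (qbz ((L:ℤ)+M+1) ((L:ℤ)+1+j) * qbz ((L:ℤ)+M+1) ((L:ℤ)+1-j))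

lemma term_expand (L M : ℕ) (j : ℤ) :
    (-1:Polynomial ℤ)^j.natAbs * X^(j^2).toNat * Bp ((L:ℤ)+1) ((M+1:ℕ):ℤ) j j
      = tA L M j + (tB L M j + tC L M j) + tD L M j := by
  rw [Bp_diag]
  have h1 : ((L:ℤ)+1) + ((M+1:ℕ):ℤ) = ((L:ℤ)+M+1) + 1 := by push_cast; ring
  have h2 : ((L:ℤ)+1) + j = (L:ℤ)+1+j := by push_cast; ring
  have h3 : ((L:ℤ)+1) - j = (L:ℤ)+1-j := by push_cast; ring
  rw [h1, h2, h3]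
  rw [qbz_pascal _ _ (by push_cast; omega), qbz_pascal ((L:ℤ)+M+1+1) ((L:ℤ)+1-j) (by omega)]
  rw [show (L:ℤ)+M+1+1-1 = (L:ℤ)+M+1 from by ring,
    show (L:ℤ)+1+j-1 = (L:ℤ)+j from by ring,
    show (L:ℤ)+1-j-1 = (L:ℤ)-j from by ring]
  unfold tA tB tC tD cf
  ring

lemma sumA (L M : ℕ) :
    ∑ j ∈ Finset.Icc (-((L:ℤ)+1)) ((L:ℤ)+1), tA L M j = Sp L (M+1) := by
  unfold Sp
  rw [← Finset.sum_subset (Finset.Icc_subset_Icc (by omega) (by omega) :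
      Finset.Icc (-(L:ℤ)) (L:ℤ) ⊆ Finset.Icc (-((L:ℤ)+1)) ((L:ℤ)+1))]
  · apply Finset.sum_congr rfl
    intro j hj
    rw [Bp_diag, show (L:ℤ)+((M+1:ℕ):ℤ) = (L:ℤ)+M+1 from by push_cast; ring]
    unfold tA cf
    ring
  · intro j hj hnj
    simp only [Finset.mem_Icc] at hj hnj
    unfold tA
    rcases (by omega : (L:ℤ)+j < 0 ∨ (L:ℤ)-j < 0) with h | h
    · rw [qbz_of_neg h]; ring
    · rw [qbz_of_neg h]; ring

lemma sumD (L M : ℕ) :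
    ∑ j ∈ Finset.Icc (-((L:ℤ)+1)) ((L:ℤ)+1), tD L M j = X^(2*L+2) * Sp (L+1) M := by
  unfold Sp
  rw [Finset.mul_sum]
  apply Finset.sum_congr (by rw [show ((L+1:ℕ):ℤ) = (L:ℤ)+1 from by push_cast; ring])
  intro j hj
  simp only [Finset.mem_Icc] at hj
  unfold tD
  rw [← pow_add, show ((L:ℤ)+1+j).toNat + ((L:ℤ)+1-j).toNat = 2*L+2 from by omega]
  rw [Bp_diag, show ((L+1:ℕ):ℤ)+(M:ℤ) = (L:ℤ)+M+1 from by push_cast; ring,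
    show ((L+1:ℕ):ℤ)+j = (L:ℤ)+1+j from by push_cast; ring,
    show ((L+1:ℕ):ℤ)-j = (L:ℤ)+1-j from by push_cast; ring]
  unfold cf
  ring

lemma tC_eq (L M : ℕ) (j : ℤ) (hj : j ∈ Finset.Icc (-((L:ℤ)+1)) ((L:ℤ)+1)) :
    tC L M j = -(tB L M (j+1)) := by
  simp only [Finset.mem_Icc] at hj
  unfold tB tC
  rw [cf_succ, show (L:ℤ)+(j+1) = (L:ℤ)+1+j from by ring,
    show (L:ℤ)+1-(j+1) = (L:ℤ)-j from by ring]
  rcases le_or_gt j (L:ℤ) with h | h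
  · have he : (j^2).toNat + ((L:ℤ)+1+j).toNat = ((j+1)^2).toNat + ((L:ℤ)-j).toNat := by
      have h1 : (0:ℤ) ≤ j^2 := sq_nonneg j
      have h2 : ((j+1):ℤ)^2 = j^2 + 2*j + 1 := by ring
      have h3 : (0:ℤ) ≤ j^2 + 2*j+1 := h2 ▸ sq_nonneg (j+1)
      obtain ⟨s, hs⟩ : ∃ s:ℤ, j^2 = s := ⟨_, rfl⟩
      rw [hs] at h1 h2 h3 ⊢
      rw [h2]
      omega
    have hX : (X:Polynomial ℤ)^((j^2).toNat + ((L:ℤ)+1+j).toNat)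
        = X^(((j+1)^2).toNat + ((L:ℤ)-j).toNat) := by rw [he]
    unfold cf
    linear_combination ((-1:Polynomial ℤ)^j.natAbs *
      (qbz ((L:ℤ)+M+1) ((L:ℤ)+1+j) * qbz ((L:ℤ)+M+1) ((L:ℤ)-j))) * hX
  · rw [qbz_of_neg (show (L:ℤ)-j < 0 from by omega)]
    ring

lemma sumBC (L M : ℕ) :
    ∑ j ∈ Finset.Icc (-((L:ℤ)+1)) ((L:ℤ)+1), tB L M j
      + ∑ j ∈ Finset.Icc (-((L:ℤ)+1)) ((L:ℤ)+1), tC L M j = 0 := by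
  have h1 : ∑ j ∈ Finset.Icc (-((L:ℤ)+1)) ((L:ℤ)+1), tC L M j
      = -∑ j ∈ Finset.Icc (-((L:ℤ)+1)) ((L:ℤ)+1), tB L M (j+1) := by
    rw [← Finset.sum_neg_distrib]
    exact Finset.sum_congr rfl (fun j hj => tC_eq L M j hj)
  have h2 : ∑ j ∈ Finset.Icc (-((L:ℤ)+1)) ((L:ℤ)+1), tB L M (j+1)
      = ∑ j ∈ Finset.Icc (-((L:ℤ)+1)+1) ((L:ℤ)+1+1), tB L M j := by
    rw [← Finset.map_add_right_Icc _ _ 1, Finset.sum_map]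
    rfl
  have hzero1 : tB L M (-((L:ℤ)+1)) = 0 := by
    unfold tB
    rw [qbz_of_neg (show (L:ℤ)+(-((L:ℤ)+1)) < 0 from by omega)]
    ring
  have hzero2 : tB L M ((L:ℤ)+1+1) = 0 := by
    unfold tB
    rw [qbz_of_neg (show (L:ℤ)+1-((L:ℤ)+1+1) < 0 from by omega)]
    ring
  have h3 : ∑ j ∈ Finset.Icc (-((L:ℤ)+1)+1) ((L:ℤ)+1+1), tB L M j
      = ∑ j ∈ Finset.Icc (-((L:ℤ)+1)) ((L:ℤ)+1+1), tB L M j := by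
    apply Finset.sum_subset (Finset.Icc_subset_Icc (by omega) (by omega))
    intro j hj hnj
    simp only [Finset.mem_Icc] at hj hnj
    have : j = -((L:ℤ)+1) := by omega
    rw [this, hzero1]
  have h4 : ∑ j ∈ Finset.Icc (-((L:ℤ)+1)) ((L:ℤ)+1), tB L M j
      = ∑ j ∈ Finset.Icc (-((L:ℤ)+1)) ((L:ℤ)+1+1), tB L M j := by
    apply Finset.sum_subset (Finset.Icc_subset_Icc (by omega) (by omega))
    intro j hj hnj
    simp only [Finset.mem_Icc] at hj hnj
    have : j = (L:ℤ)+1+1 := by omega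
    rw [this, hzero2]
  rw [h1, h2, h3, ← h4]
  ring

lemma Sp_step (L M : ℕ) : Sp (L+1) (M+1) = Sp L (M+1) + X^(2*L+2) * Sp (L+1) M := by
  have e : Sp (L+1) (M+1)
      = (∑ j ∈ Finset.Icc (-((L:ℤ)+1)) ((L:ℤ)+1), tA L M j)
        + ((∑ j ∈ Finset.Icc (-((L:ℤ)+1)) ((L:ℤ)+1), tB L M j)
            + (∑ j ∈ Finset.Icc (-((L:ℤ)+1)) ((L:ℤ)+1), tC L M j))
        + (∑ j ∈ Finset.Icc (-((L:ℤ)+1)) ((L:ℤ)+1), tD L M j) := by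
    unfold Sp
    rw [show (-((L+1:ℕ):ℤ)) = -((L:ℤ)+1) from by push_cast; ring,
      show ((L+1:ℕ):ℤ) = (L:ℤ)+1 from by push_cast; ring]
    rw [Finset.sum_congr rfl (fun j _ => term_expand L M j)]
    rw [Finset.sum_add_distrib, Finset.sum_add_distrib, Finset.sum_add_distrib]
  rw [e, sumBC, sumA, sumD]
  ring

lemma qb_comp_step (L M : ℕ) :
    (qb ((L+1)+(M+1)) (M+1)).comp (X^2)
      = (qb (L+(M+1)) (M+1)).comp (X^2) + X^(2*L+2) * (qb ((L+1)+M) M).comp (X^2) := by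
  have h := qb_pascal2 (L+M+1) M
  rw [show L+M+1-M = L+1 from by omega] at h
  rw [show (L+1)+(M+1) = (L+M+1)+1 from by omega, h,
    show L+(M+1) = L+M+1 from by omega, show (L+1)+M = L+M+1 from by omega]
  rw [add_comp, mul_comp, X_pow_comp, ← pow_mul]
  ring_nf

lemma Sp_eq (L : ℕ) : ∀ M : ℕ, Sp L M = (qb (L+M) M).comp (X^2) := by
  induction L with
  | zero =>
    intro M
    rw [Sp_left_zero, Nat.zero_add, qb_self, one_comp]
  | succ L ihL =>
    intro M
    induction M with
    | zero => rw [Sp_right_zero, Nat.add_zero, qb_zero_right, one_comp]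
    | succ M ihM =>
      rw [Sp_step, ihL (M+1), ihM, qb_comp_step]

theorem stmt16 (L M : ℕ) :
    (∑ᶠ j : ℤ, (-1 : Polynomial ℤ) ^ j.natAbs * X ^ (j ^ 2).toNat * Bp L M j j)
      = (qb (L + M) M).comp (X ^ 2) := by
  have hfin : (∑ᶠ j : ℤ, (-1 : Polynomial ℤ) ^ j.natAbs * X ^ (j ^ 2).toNat * Bp L M j j)
      = Sp L M := by
    apply finsum_eq_finset_sum_of_support_subset
    intro j hj
    simp only [Finset.coe_Icc, Set.mem_Icc]
    by_contra hc
    apply hj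
    show (-1:Polynomial ℤ)^j.natAbs * X^(j^2).toNat * Bp L M j j = 0
    rw [Bp_diag]
    rcases (by omega : (L:ℤ)+j < 0 ∨ (L:ℤ)-j < 0) with h | h
    · rw [qbz_of_neg h]; ring
    · rw [qbz_of_neg h]; ring
  rw [hfin, Sp_eq]
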